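/- Let 𝒯 be a regular T-mesh occupying Ω = [x_l,x_r]×[y_b,y_t], let y₀ < y₁ < ⋯ < y_n be the distinct y-coordinates of the horizontal l-edges of 𝒯, and let g ∈ S̄(1,1,0,0,𝒯). Then the conditions ∫_{x_l}^{x_r} ∂g/∂y(s,y_i−) ds = ∫_{x_l}^{x_r} ∂g/∂y(s,y_i+) ds for all i = 0,1,…,n are equivalent to the conditions ∫_{x_l}^{x_r} ∂g/∂y(s,y_i−) ds = 0 for all i = 1,…,n−1. -/
import Mathlib


open Filter Set MeasureTheory
open scoped Topology

noncomputable section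

/-- A closed axis-aligned rectangle with positive side lengths. -/
structure Rect where
  xmin : ℝ
  xmax : ℝ
  ymin : ℝ
  ymax : ℝ
  hx : xmin < xmax
  hy : ymin < ymax

/-- The set of points of a rectangle. -/
def Rect.toSet (c : Rect) : Set (ℝ × ℝ) :=
  Set.Icc c.xmin c.xmax ×ˢ Set.Icc c.ymin c.ymax

/-- A regular T-mesh: finitely many cells (closed axis-aligned rectangles) with pairwise
disjoint interiors whose union is a closed axis-aligned rectangle. -/
structure TMesh where
  cells : Set Rect
  outer : Rect
  finite_cells : cells.Finite
  pairwise_disjoint : cells.Pairwise fun c d => Disjoint (interior c.toSet) (interior d.toSet)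
  union_eq : (⋃ c ∈ cells, c.toSet) = outer.toSet

/-- The region occupied by a T-mesh. -/
def TMesh.Omega (T : TMesh) : Set (ℝ × ℝ) := T.outer.toSet

/-- The edge skeleton of a T-mesh: the union of the boundaries of all cells. -/
def TMesh.skeleton (T : TMesh) : Set (ℝ × ℝ) := ⋃ c ∈ T.cells, frontier c.toSet

/-- A vertex of the mesh: a corner of some cell. -/
def IsVertexOf (T : TMesh) (p : ℝ × ℝ) : Prop :=
  ∃ c ∈ T.cells, (p.1 = c.xmin ∨ p.1 = c.xmax) ∧ (p.2 = c.ymin ∨ p.2 = c.ymax)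

/-- A crossing vertex: an interior vertex from which four small axis-parallel segments
stay inside the edge skeleton. -/
def IsCrossingVertex (T : TMesh) (p : ℝ × ℝ) : Prop :=
  IsVertexOf T p ∧ p ∈ interior T.Omega ∧
    ∃ ε > (0 : ℝ), segment ℝ p (p + (ε, 0)) ⊆ T.skeleton ∧
      segment ℝ p (p - (ε, 0)) ⊆ T.skeleton ∧
      segment ℝ p (p + (0, ε)) ⊆ T.skeleton ∧
      segment ℝ p (p - (0, ε)) ⊆ T.skeleton

/-- A horizontal closed segment of positive length. -/
def IsHorizSeg (s : Set (ℝ × ℝ)) : Prop :=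
  ∃ a b y : ℝ, a < b ∧ s = Set.Icc a b ×ˢ ({y} : Set ℝ)

/-- A vertical closed segment of positive length. -/
def IsVertSeg (s : Set (ℝ × ℝ)) : Prop :=
  ∃ x a b : ℝ, a < b ∧ s = ({x} : Set ℝ) ×ˢ Set.Icc a b

/-- An l-edge: a maximal axis-parallel closed segment of positive length contained in the
edge skeleton. -/
def IsLEdge (T : TMesh) (s : Set (ℝ × ℝ)) : Prop :=
  (IsHorizSeg s ∨ IsVertSeg s) ∧ s ⊆ T.skeleton ∧
    ∀ s', (IsHorizSeg s' ∨ IsVertSeg s') → s' ⊆ T.skeleton → s ⊆ s' → s' = s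

def IsBoundaryLEdge (T : TMesh) (s : Set (ℝ × ℝ)) : Prop :=
  IsLEdge T s ∧ s ⊆ frontier T.Omega

def IsInteriorLEdge (T : TMesh) (s : Set (ℝ × ℝ)) : Prop :=
  IsLEdge T s ∧ ¬ s ⊆ frontier T.Omega

/-- There is a horizontal l-edge with endpoints `(a,y)`, `(b,y)`. -/
def HorizLEdgeAt (T : TMesh) (a b y : ℝ) : Prop :=
  a < b ∧ IsLEdge T (Set.Icc a b ×ˢ ({y} : Set ℝ))

/-- The number `V⁺` of crossing vertices. -/
def crossingCount (T : TMesh) : ℕ := {p | IsCrossingVertex T p}.ncard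

/-- The number `E` of interior l-edges. -/
def interiorLEdgeCount (T : TMesh) : ℕ := {s | IsInteriorLEdge T s}.ncard

/-- The number `F` of cells. -/
def cellCount (T : TMesh) : ℕ := T.cells.ncard

/-! Partial derivatives (within a set) and smoothness. -/

def pdXW (S : Set (ℝ × ℝ)) (f : ℝ × ℝ → ℝ) : ℝ × ℝ → ℝ :=
  fun p => derivWithin (fun x => f (x, p.2)) {x | (x, p.2) ∈ S} p.1

def pdYW (S : Set (ℝ × ℝ)) (f : ℝ × ℝ → ℝ) : ℝ × ℝ → ℝ :=
  fun p => derivWithin (fun y => f (p.1, y)) {y | (p.1, y) ∈ S} p.2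

/-- The mixed partial derivative `∂^{i+j} f/∂x^i∂y^j`, taken within the set `S`. -/
def mpW (S : Set (ℝ × ℝ)) (i j : ℕ) (f : ℝ × ℝ → ℝ) : ℝ × ℝ → ℝ :=
  (pdYW S)^[j] ((pdXW S)^[i] f)

/-- `f` has continuous mixed partials `∂^{i+j}f/∂x^i∂y^j` on `S` for all `0 ≤ i ≤ α`,
`0 ≤ j ≤ β` (smoothness indices `α, β ∈ ℤ` may be `-1`, in which case nothing is required
in that variable). -/
def SmoothWithin (S : Set (ℝ × ℝ)) (α β : ℤ) (f : ℝ × ℝ → ℝ) : Prop :=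
  (∀ i j : ℕ, (i : ℤ) ≤ α → (j : ℤ) ≤ β → ContinuousOn (mpW S i j f) S) ∧
  (∀ i : ℕ, (i : ℤ) < α → ∀ p ∈ S,
    HasDerivWithinAt (fun x => (pdXW S)^[i] f (x, p.2)) ((pdXW S)^[i+1] f p)
      {x | (x, p.2) ∈ S} p.1) ∧
  (∀ i j : ℕ, (i : ℤ) ≤ α → (j : ℤ) < β → ∀ p ∈ S,
    HasDerivWithinAt (fun y => mpW S i j f (p.1, y)) (mpW S i (j+1) f p)
      {y | (p.1, y) ∈ S} p.2)

/-- `f` agrees on each cell of `T` with a polynomial of bidegree at most `(m,n)`. -/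
def PiecewisePoly (m n : ℕ) (T : TMesh) (f : ℝ × ℝ → ℝ) : Prop :=
  ∀ c ∈ T.cells, ∃ p : MvPolynomial (Fin 2) ℝ,
    p.degreeOf 0 ≤ m ∧ p.degreeOf 1 ≤ n ∧
    ∀ q ∈ c.toSet, f q = MvPolynomial.eval ![q.1, q.2] p

/-- The spline space with homogeneous boundary conditions `S̄(m,n,α,β,T)`. -/
def SBar (m n : ℕ) (α β : ℤ) (T : TMesh) : Set (ℝ × ℝ → ℝ) :=
  {f | (∀ p, p ∉ T.Omega → f p = 0) ∧ PiecewisePoly m n T f ∧ SmoothWithin Set.univ α β f}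

/-- The spline space `S(m,n,α,β,T)` over the T-mesh: membership only constrains the values
on the occupied region `Ω` (smoothness is required within `Ω`). -/
def SOn (m n : ℕ) (α β : ℤ) (T : TMesh) : Set (ℝ × ℝ → ℝ) :=
  {f | PiecewisePoly m n T f ∧ SmoothWithin T.Omega α β f}

/-- The set of functions `S` is a linear space of dimension `d`. -/
def HasDim (S : Set (ℝ × ℝ → ℝ)) (d : ℕ) : Prop :=
  ∃ b : Fin d → (ℝ × ℝ → ℝ), (∀ i, b i ∈ S) ∧ LinearIndependent ℝ b ∧
    ∀ f ∈ S, ∃ c : Fin d → ℝ, f = ∑ i, c i • b i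

/-- The linear space `S` has dimension at least `d`. -/
def DimGE (S : Set (ℝ × ℝ → ℝ)) (d : ℕ) : Prop :=
  ∃ b : Fin d → (ℝ × ℝ → ℝ), (∀ i, b i ∈ S) ∧ LinearIndependent ℝ b

/-- The set of functions `S`, regarded as a space of functions on `Ω` (i.e. modulo the
values outside `Ω`), has dimension `d`. -/
def HasDimOn (Ω : Set (ℝ × ℝ)) (S : Set (ℝ × ℝ → ℝ)) (d : ℕ) : Prop :=
  ∃ b : Fin d → (ℝ × ℝ → ℝ), (∀ i, b i ∈ S) ∧
    LinearIndependent ℝ (fun i => Ω.restrict (b i)) ∧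
    ∀ f ∈ S, ∃ c : Fin d → ℝ, Set.EqOn f (∑ i, c i • b i) Ω

/-! The integration operator `I` and one-sided limits. -/

/-- `I(g)(x,y) = ∫_{-∞}^x ∫_{-∞}^y g(s,t) dt ds`. -/
def Ig (g : ℝ × ℝ → ℝ) : ℝ × ℝ → ℝ :=
  fun p => ∫ s in Set.Iic p.1, (∫ t in Set.Iic p.2, g (s, t))

/-- `g(s, y−)`, the one-sided limit from below in the second variable. -/
def limBelowY (g : ℝ × ℝ → ℝ) (y s : ℝ) : ℝ := limUnder (𝓝[<] y) fun t => g (s, t)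
/-- `g(s, y+)`. -/
def limAboveY (g : ℝ × ℝ → ℝ) (y s : ℝ) : ℝ := limUnder (𝓝[>] y) fun t => g (s, t)
/-- `g(x−, t)`. -/
def limLeftX (g : ℝ × ℝ → ℝ) (x t : ℝ) : ℝ := limUnder (𝓝[<] x) fun s => g (s, t)
/-- `g(x+, t)`. -/
def limRightX (g : ℝ × ℝ → ℝ) (x t : ℝ) : ℝ := limUnder (𝓝[>] x) fun s => g (s, t)

/-- The (cell-wise) partial derivative in `x`. -/
def pdX (f : ℝ × ℝ → ℝ) : ℝ × ℝ → ℝ := fun p => deriv (fun x => f (x, p.2)) p.1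
/-- The (cell-wise) partial derivative in `y`. -/
def pdY (f : ℝ × ℝ → ℝ) : ℝ × ℝ → ℝ := fun p => deriv (fun y => f (p.1, y)) p.2

/-- The union of the open interiors of the cells. -/
def cellInteriors (T : TMesh) : Set (ℝ × ℝ) := ⋃ c ∈ T.cells, interior c.toSet

open Classical in
/-- The cell-wise mixed partial derivative `∂²f/∂x∂y`, set to `0` off the cell interiors. -/
def Dmix (T : TMesh) (f : ℝ × ℝ → ℝ) : ℝ × ℝ → ℝ :=
  fun p => if p ∈ cellInteriors T then pdX (pdY f) p else 0

/-! Extended T-meshes. -/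

/-- The skeleton of a tensor-product mesh with grid lines `X 0 < ⋯ < X (2m+1)` and
`Y 0 < ⋯ < Y (2n+1)`. -/
def gridSkeleton (m n : ℕ) (X Y : ℕ → ℝ) : Set (ℝ × ℝ) :=
  {p : ℝ × ℝ | (∃ i ≤ 2 * m + 1, p.1 = X i) ∧ Y 0 ≤ p.2 ∧ p.2 ≤ Y (2 * n + 1)} ∪
  {p : ℝ × ℝ | (∃ j ≤ 2 * n + 1, p.2 = Y j) ∧ X 0 ≤ p.1 ∧ p.1 ≤ X (2 * m + 1)}

/-- The straight extensions, up to the rectangle `[x0,x1] × [y0,y1]`, of every l-edge of `T`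
having an endpoint on the boundary of the region of `T`. -/
def extSegs (T : TMesh) (x0 x1 y0 y1 : ℝ) : Set (ℝ × ℝ) :=
  {p : ℝ × ℝ | ∃ a b y, HorizLEdgeAt T a b y ∧ a = T.outer.xmin ∧
      p.2 = y ∧ x0 ≤ p.1 ∧ p.1 ≤ a} ∪
  {p : ℝ × ℝ | ∃ a b y, HorizLEdgeAt T a b y ∧ b = T.outer.xmax ∧
      p.2 = y ∧ b ≤ p.1 ∧ p.1 ≤ x1} ∪
  {p : ℝ × ℝ | ∃ x a b, a < b ∧ IsLEdge T (({x} : Set ℝ) ×ˢ Set.Icc a b) ∧ a = T.outer.ymin ∧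
      p.1 = x ∧ y0 ≤ p.2 ∧ p.2 ≤ a} ∪
  {p : ℝ × ℝ | ∃ x a b, a < b ∧ IsLEdge T (({x} : Set ℝ) ×ˢ Set.Icc a b) ∧ b = T.outer.ymax ∧
      p.1 = x ∧ b ≤ p.2 ∧ p.2 ≤ y1}

/-- `Te` is an extension of `T` associated with `S(m,n,m-1,n-1,T)`: a tensor-product mesh with
`2(m+1)` vertical and `2(n+1)` horizontal grid lines whose central rectangle is the region of
`T`, together with `T` and the straight extensions of all boundary-reaching edges of `T`. -/
def IsExtensionOf (m n : ℕ) (T Te : TMesh) : Prop :=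
  ∃ X Y : ℕ → ℝ,
    (∀ i < 2 * m + 1, X i < X (i + 1)) ∧ (∀ j < 2 * n + 1, Y j < Y (j + 1)) ∧
    X m = T.outer.xmin ∧ X (m + 1) = T.outer.xmax ∧
    Y n = T.outer.ymin ∧ Y (n + 1) = T.outer.ymax ∧
    Te.outer.xmin = X 0 ∧ Te.outer.xmax = X (2 * m + 1) ∧
    Te.outer.ymin = Y 0 ∧ Te.outer.ymax = Y (2 * n + 1) ∧
    Te.skeleton = T.skeleton ∪ gridSkeleton m n X Y ∪
      extSegs T (X 0) (X (2 * m + 1)) (Y 0) (Y (2 * n + 1))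

/-! Hierarchical T-meshes. -/

/-- `T` is a tensor-product mesh. -/
def IsTensorMesh (T : TMesh) : Prop :=
  ∃ (p q : ℕ) (x y : ℕ → ℝ), 0 < p ∧ 0 < q ∧
    (∀ i < p, x i < x (i + 1)) ∧ (∀ j < q, y j < y (j + 1)) ∧
    T.cells = {c : Rect | ∃ i < p, ∃ j < q,
      c.xmin = x i ∧ c.xmax = x (i + 1) ∧ c.ymin = y j ∧ c.ymax = y (j + 1)}

/-- The four equal subcells obtained by subdividing a cell by the two segments joining the
midpoints of opposite edges. -/
def Rect.quads (c : Rect) : Set Rect :=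
  { ⟨c.xmin, (c.xmin + c.xmax) / 2, c.ymin, (c.ymin + c.ymax) / 2,
      by linarith [c.hx], by linarith [c.hy]⟩,
    ⟨(c.xmin + c.xmax) / 2, c.xmax, c.ymin, (c.ymin + c.ymax) / 2,
      by linarith [c.hx], by linarith [c.hy]⟩,
    ⟨c.xmin, (c.xmin + c.xmax) / 2, (c.ymin + c.ymax) / 2, c.ymax,
      by linarith [c.hx], by linarith [c.hy]⟩,
    ⟨(c.xmin + c.xmax) / 2, c.xmax, (c.ymin + c.ymax) / 2, c.ymax,
      by linarith [c.hx], by linarith [c.hy]⟩ }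

/-- `T'` is obtained from `T` by subdividing exactly the cells in `S` into four quadrants. -/
def StepSubdiv (T T' : TMesh) (S : Set Rect) : Prop :=
  S ⊆ T.cells ∧ T'.outer = T.outer ∧
    T'.cells = (T.cells \ S) ∪ ⋃ c ∈ S, Rect.quads c

/-- A hierarchical T-mesh: the recursive construction `𝒯⁰, 𝒯¹, …, 𝒯^M`. -/
structure HierMesh where
  M : ℕ
  level : ℕ → TMesh
  subdivided : ℕ → Set Rect
  tensor0 : IsTensorMesh (level 0)
  step : ∀ k < M, StepSubdiv (level k) (level (k + 1)) (subdivided k)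

/-- The final mesh `𝒯 = 𝒯^M`. -/
def HierMesh.final (H : HierMesh) : TMesh := H.level H.M

/-- Two cells share a (horizontal or vertical) edge segment of positive length. -/
def EdgeAdjacent (c d : Rect) : Prop :=
  c ≠ d ∧ ∃ s : Set (ℝ × ℝ), (IsHorizSeg s ∨ IsVertSeg s) ∧ s ⊆ c.toSet ∩ d.toSet

/-- `c` is an isolated subdivided cell at step `k`: it is subdivided at step `k`, but no cell
of the level-`k` mesh sharing a horizontal or vertical edge with it is subdivided then. -/
def IsIsolatedAt (H : HierMesh) (k : ℕ) (c : Rect) : Prop :=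
  k < H.M ∧ c ∈ H.subdivided k ∧
    ∀ d ∈ (H.level k).cells, EdgeAdjacent c d → d ∉ H.subdivided k

/-- The isolated subdivided cells occurring in the construction of `H`. -/
def isoCells (H : HierMesh) : Set Rect := {c | ∃ k, IsIsolatedAt H k c}

/-- A regular T-mesh is crossing-vertex connected: any two distinct crossing vertices are
joined by a poly-line of axis-parallel mesh edges all of whose (corner) joints are crossing
vertices. -/
def IsCVConnected (T : TMesh) : Prop :=
  ∀ u v : ℝ × ℝ, IsCrossingVertex T u → IsCrossingVertex T v → u ≠ v →
    ∃ (N : ℕ) (p : ℕ → ℝ × ℝ), p 0 = u ∧ p N = v ∧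
      (∀ i < N, p i ≠ p (i + 1) ∧ segment ℝ (p i) (p (i + 1)) ⊆ T.skeleton ∧
        ((p i).1 = (p (i + 1)).1 ∨ (p i).2 = (p (i + 1)).2)) ∧
      (∀ i, 0 < i → i < N →
        (((p (i - 1)).2 = (p i).2 ∧ (p i).1 = (p (i + 1)).1) ∨
         ((p (i - 1)).1 = (p i).1 ∧ (p i).2 = (p (i + 1)).2)) →
        IsCrossingVertex T (p i))

/-- The level of an l-edge `s`: the first level of the hierarchy whose skeleton contains it. -/
def LEdgeLevel (H : HierMesh) (s : Set (ℝ × ℝ)) (k : ℕ) : Prop :=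
  s ⊆ (H.level k).skeleton ∧ ∀ j < k, ¬ s ⊆ (H.level j).skeleton

/-- `yb < yi < yt` are the heights of the two support l-edges of the horizontal l-edge
`[a,b] × {yi}` of the hierarchical mesh `H`: for a level-0 l-edge, the nearest level-0
horizontal l-edges below and above; for a level-`(k+1)` l-edge, the heights of the bottom
and top edges of a cell subdivided at step `k` whose inserted cross has its horizontal arm
on the l-edge. -/
def SupportHeights (H : HierMesh) (a b yi yb yt : ℝ) : Prop :=
  yb < yi ∧ yi < yt ∧
  ((LEdgeLevel H (Set.Icc a b ×ˢ ({yi} : Set ℝ)) 0 ∧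
     (∃ a' b', HorizLEdgeAt (H.level 0) a' b' yb) ∧
     (∃ a' b', HorizLEdgeAt (H.level 0) a' b' yt) ∧
     (∀ y a' b', HorizLEdgeAt (H.level 0) a' b' y → ¬(yb < y ∧ y < yt ∧ y ≠ yi))) ∨
   (∃ k, LEdgeLevel H (Set.Icc a b ×ˢ ({yi} : Set ℝ)) (k + 1) ∧
     ∃ c ∈ H.subdivided k, c.ymin = yb ∧ c.ymax = yt ∧ (c.ymin + c.ymax) / 2 = yi ∧
       a ≤ c.xmin ∧ c.xmax ≤ b))

/-- `U j` is a proper submesh of `U i` (its region is strictly contained in that of `U i`). -/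
def ProperSubmesh {ι : Type*} (U : ι → TMesh) (j i : ι) : Prop :=
  j ≠ i ∧ (U j).Omega ⊆ (U i).Omega ∧ (U j).Omega ≠ (U i).Omega

/-! The CVR graph. -/

/-- An edge of the CVR graph: a segment joining two consecutive crossing vertices along an
l-edge. -/
def IsCVREdge (T : TMesh) (s : Set (ℝ × ℝ)) : Prop :=
  ∃ u v : ℝ × ℝ, u ≠ v ∧ s = segment ℝ u v ∧ IsCrossingVertex T u ∧ IsCrossingVertex T v ∧
    (∃ l, IsLEdge T l ∧ segment ℝ u v ⊆ l) ∧
    ∀ w ∈ segment ℝ u v, IsCrossingVertex T w → w = u ∨ w = v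

/-- The union of the edges of the CVR graph, as a plane set. -/
def cvrGraphSet (T : TMesh) : Set (ℝ × ℝ) := ⋃₀ {s | IsCVREdge T s}

/-- The number of edges of the CVR graph. -/
def cvrEdgeCount (T : TMesh) : ℕ := {s | IsCVREdge T s}.ncard

/-- The number of bounded faces of the CVR graph: bounded connected components of the
complement of the union of its edges. -/
def cvrFaceCount (T : TMesh) : ℕ :=
  {U : Set (ℝ × ℝ) | (∃ p ∈ (cvrGraphSet T)ᶜ, U = connectedComponentIn (cvrGraphSet T)ᶜ p) ∧
     Bornology.IsBounded U}.ncard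
section JumpAux

lemma Rect.isClosed_toSet (c : Rect) : IsClosed c.toSet :=
  isClosed_Icc.prod isClosed_Icc

lemma Rect.mem_toSet {c : Rect} {p : ℝ × ℝ} :
    p ∈ c.toSet ↔ (c.xmin ≤ p.1 ∧ p.1 ≤ c.xmax) ∧ (c.ymin ≤ p.2 ∧ p.2 ≤ c.ymax) := by
  simp [Rect.toSet, Set.mem_prod, Prod.le_def]
  tauto

lemma Rect.interior_toSet (c : Rect) :
    interior c.toSet = Set.Ioo c.xmin c.xmax ×ˢ Set.Ioo c.ymin c.ymax := by
  rw [Rect.toSet, interior_prod_eq, interior_Icc, interior_Icc]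

lemma TMesh.mem_Omega {T : TMesh} {p : ℝ × ℝ} :
    p ∈ T.Omega ↔ (T.outer.xmin ≤ p.1 ∧ p.1 ≤ T.outer.xmax) ∧
      (T.outer.ymin ≤ p.2 ∧ p.2 ≤ T.outer.ymax) := Rect.mem_toSet

lemma TMesh.isClosed_skeleton (T : TMesh) : IsClosed T.skeleton :=
  T.finite_cells.isClosed_biUnion fun _ _ => isClosed_frontier

lemma TMesh.cell_subset_Omega {T : TMesh} {c : Rect} (hc : c ∈ T.cells) :
    c.toSet ⊆ T.Omega := by
  rw [TMesh.Omega, ← T.union_eq]; exact Set.subset_biUnion_of_mem hc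

lemma TMesh.frontier_subset_skeleton {T : TMesh} {c : Rect} (hc : c ∈ T.cells) :
    frontier c.toSet ⊆ T.skeleton :=
  Set.subset_biUnion_of_mem (u := fun c => frontier c.toSet) hc

lemma TMesh.skeleton_subset_Omega (T : TMesh) : T.skeleton ⊆ T.Omega := by
  intro p hp
  simp only [TMesh.skeleton, Set.mem_iUnion] at hp
  obtain ⟨c, hc, hpc⟩ := hp
  exact T.cell_subset_Omega hc ((c.isClosed_toSet.frontier_subset) hpc)

lemma TMesh.exists_cell {T : TMesh} {p : ℝ × ℝ} (hp : p ∈ T.Omega) :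
    ∃ c ∈ T.cells, p ∈ c.toSet := by
  rw [TMesh.Omega, ← T.union_eq] at hp
  simpa using hp

/-- Extending a horizontal segment of the skeleton to a horizontal l-edge. -/
lemma exists_horizLEdge (T : TMesh) {a0 b0 y : ℝ} (hab : a0 < b0)
    (hsk : Set.Icc a0 b0 ×ˢ ({y} : Set ℝ) ⊆ T.skeleton) :
    ∃ a b, HorizLEdgeAt T a b y := by
  classical
  set S : Set ℝ := {x | (x, y) ∈ T.skeleton} with hSdef
  have hScl : IsClosed S :=
    T.isClosed_skeleton.preimage (continuous_id.prodMk continuous_const)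
  have hSrange : ∀ x ∈ S, T.outer.xmin ≤ x ∧ x ≤ T.outer.xmax := fun x hx =>
    (TMesh.mem_Omega.mp (T.skeleton_subset_Omega hx)).1
  have hmemS : ∀ x, a0 ≤ x → x ≤ b0 → x ∈ S := fun x h1 h2 =>
    hsk (by exact Set.mk_mem_prod ⟨h1, h2⟩ rfl)
  set A : Set ℝ := {x | x ≤ a0 ∧ Set.Icc x b0 ⊆ S} with hAdef
  set Bs : Set ℝ := {x | b0 ≤ x ∧ Set.Icc a0 x ⊆ S} with hBdef
  have hA0 : a0 ∈ A := ⟨le_refl _, fun t ht => hmemS t ht.1 ht.2⟩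
  have hB0 : b0 ∈ Bs := ⟨le_refl _, fun t ht => hmemS t ht.1 ht.2⟩
  have hAS : A ⊆ S := fun x hx => hx.2 ⟨le_refl _, hx.1.trans hab.le⟩
  have hBS : Bs ⊆ S := fun x hx => hx.2 ⟨hab.le.trans hx.1, le_refl _⟩
  have hAbdd : BddBelow A := ⟨T.outer.xmin, fun x hx => (hSrange x (hAS hx)).1⟩
  have hBbdd : BddAbove Bs := ⟨T.outer.xmax, fun x hx => (hSrange x (hBS hx)).2⟩
  set a := sInf A with ha
  set b := sSup Bs with hb
  have haS : a ∈ S := hScl.closure_eq ▸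
    (closure_mono hAS (csInf_mem_closure ⟨a0, hA0⟩ hAbdd))
  have hbS : b ∈ S := hScl.closure_eq ▸
    (closure_mono hBS (csSup_mem_closure ⟨b0, hB0⟩ hBbdd))
  have hale : a ≤ a0 := csInf_le hAbdd hA0
  have hble : b0 ≤ b := le_csSup hBbdd hB0
  have haIcc : Set.Icc a b0 ⊆ S := by
    intro t ht
    rcases eq_or_lt_of_le ht.1 with h | h
    · exact h ▸ haS
    · obtain ⟨x, hxA, hxt⟩ := exists_lt_of_csInf_lt ⟨a0, hA0⟩ h
      exact hxA.2 ⟨hxt.le, ht.2⟩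
  have hbIcc : Set.Icc a0 b ⊆ S := by
    intro t ht
    rcases eq_or_lt_of_le ht.2 with h | h
    · exact h ▸ hbS
    · obtain ⟨x, hxB, hxt⟩ := exists_lt_of_lt_csSup ⟨b0, hB0⟩ h
      exact hxB.2 ⟨ht.1, hxt.le⟩
  have hfullS : Set.Icc a b ⊆ S := by
    intro t ht
    rcases le_or_gt t b0 with h | h
    · exact haIcc ⟨ht.1, h⟩
    · exact hbIcc ⟨hab.le.trans h.le, ht.2⟩
  have habfull : a < b := lt_of_le_of_lt hale (hab.trans_le hble)
  refine ⟨a, b, habfull, ⟨Or.inl ⟨a, b, y, habfull, rfl⟩, ?_, ?_⟩⟩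
  · intro p hp
    obtain ⟨hp1, hp2⟩ := Set.mem_prod.mp hp
    have : p = (p.1, y) := by
      ext
      · rfl
      · exact hp2
    rw [this]
    exact hfullS hp1
  · rintro s' (⟨a', b', y', hab', rfl⟩ | ⟨x', a', b', hab', rfl⟩) hsub hss
    · have hma : (a, y) ∈ Set.Icc a' b' ×ˢ ({y'} : Set ℝ) :=
        hss (Set.mk_mem_prod ⟨le_refl _, habfull.le⟩ rfl)
      have hmb : (b, y) ∈ Set.Icc a' b' ×ˢ ({y'} : Set ℝ) :=
        hss (Set.mk_mem_prod ⟨habfull.le, le_refl _⟩ rfl)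
      have hy' : y' = y := hma.2.symm
      subst hy'
      have haa' : a' ≤ a := hma.1.1
      have hbb' : b ≤ b' := hmb.1.2
      have ha' : a' ∈ A := by
        refine ⟨haa'.trans hale, fun t ht => ?_⟩
        exact hsub (Set.mk_mem_prod ⟨ht.1, ht.2.trans (hble.trans hbb')⟩ rfl)
      have hb' : b' ∈ Bs := by
        refine ⟨hble.trans hbb', fun t ht => ?_⟩
        exact hsub (Set.mk_mem_prod ⟨(haa'.trans hale).trans ht.1, ht.2⟩ rfl)
      have ea : a' = a := le_antisymm haa' (csInf_le hAbdd ha')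
      have eb : b' = b := le_antisymm (le_csSup hBbdd hb') hbb'
      rw [ea, eb]
    · have hma : (a, y) ∈ ({x'} : Set ℝ) ×ˢ Set.Icc a' b' :=
        hss (Set.mk_mem_prod ⟨le_refl _, habfull.le⟩ rfl)
      have hmb : (b, y) ∈ ({x'} : Set ℝ) ×ˢ Set.Icc a' b' :=
        hss (Set.mk_mem_prod ⟨habfull.le, le_refl _⟩ rfl)
      have h1 : a = x' := hma.1
      have h2 : b = x' := hmb.1
      exact absurd (h1.trans h2.symm) habfull.ne

end JumpAux

section JumpAux2

/-- Every l-edge height lies between the vertical bounds of the region. -/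
lemma height_range {T : TMesh} {a b y : ℝ} (h : HorizLEdgeAt T a b y) :
    T.outer.ymin ≤ y ∧ y ≤ T.outer.ymax := by
  have : (a, y) ∈ T.skeleton :=
    h.2.2.1 (Set.mk_mem_prod ⟨le_refl _, h.1.le⟩ rfl)
  exact (TMesh.mem_Omega.mp (T.skeleton_subset_Omega this)).2

/-- The bottom boundary of the region lies in the skeleton. -/
lemma bottom_subset_skeleton (T : TMesh) :
    Set.Icc T.outer.xmin T.outer.xmax ×ˢ ({T.outer.ymin} : Set ℝ) ⊆ T.skeleton := by
  rintro ⟨x, y⟩ hp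
  obtain ⟨hx, hy⟩ := Set.mem_prod.mp hp
  simp only [Set.mem_singleton_iff] at hy
  subst hy
  have hΩ : (x, T.outer.ymin) ∈ T.Omega :=
    TMesh.mem_Omega.mpr ⟨hx, le_refl _, T.outer.hy.le⟩
  obtain ⟨c, hc, hpc⟩ := TMesh.exists_cell hΩ
  have hcorner : ((c.xmin, c.ymin) : ℝ × ℝ) ∈ c.toSet :=
    Rect.mem_toSet.mpr ⟨⟨le_refl _, c.hx.le⟩, ⟨le_refl _, c.hy.le⟩⟩
  have hymin : T.outer.ymin ≤ c.ymin :=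
    (TMesh.mem_Omega.mp (T.cell_subset_Omega hc hcorner)).2.1
  refine T.frontier_subset_skeleton hc ?_
  rw [c.isClosed_toSet.frontier_eq]
  refine ⟨hpc, fun hint => ?_⟩
  rw [Rect.interior_toSet] at hint
  exact absurd hint.2.1 (not_lt.mpr hymin)

/-- The top boundary of the region lies in the skeleton. -/
lemma top_subset_skeleton (T : TMesh) :
    Set.Icc T.outer.xmin T.outer.xmax ×ˢ ({T.outer.ymax} : Set ℝ) ⊆ T.skeleton := by
  rintro ⟨x, y⟩ hp
  obtain ⟨hx, hy⟩ := Set.mem_prod.mp hp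
  simp only [Set.mem_singleton_iff] at hy
  subst hy
  have hΩ : (x, T.outer.ymax) ∈ T.Omega :=
    TMesh.mem_Omega.mpr ⟨hx, T.outer.hy.le, le_refl _⟩
  obtain ⟨c, hc, hpc⟩ := TMesh.exists_cell hΩ
  have hcorner : ((c.xmin, c.ymax) : ℝ × ℝ) ∈ c.toSet :=
    Rect.mem_toSet.mpr ⟨⟨le_refl _, c.hx.le⟩, ⟨c.hy.le, le_refl _⟩⟩
  have hymax : c.ymax ≤ T.outer.ymax :=
    (TMesh.mem_Omega.mp (T.cell_subset_Omega hc hcorner)).2.2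
  refine T.frontier_subset_skeleton hc ?_
  rw [c.isClosed_toSet.frontier_eq]
  refine ⟨hpc, fun hint => ?_⟩
  rw [Rect.interior_toSet] at hint
  exact absurd hint.2.2 (not_lt.mpr hymax)

lemma exists_bottom_lEdge (T : TMesh) : ∃ a b, HorizLEdgeAt T a b T.outer.ymin :=
  exists_horizLEdge T T.outer.hx (bottom_subset_skeleton T)

lemma exists_top_lEdge (T : TMesh) : ∃ a b, HorizLEdgeAt T a b T.outer.ymax :=
  exists_horizLEdge T T.outer.hx (top_subset_skeleton T)

/-- The bottom edge of a cell gives a horizontal l-edge at its height. -/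
lemma cell_ymin_lEdge {T : TMesh} {c : Rect} (hc : c ∈ T.cells) :
    ∃ a b, HorizLEdgeAt T a b c.ymin := by
  refine exists_horizLEdge T c.hx ?_
  rintro ⟨x, y⟩ hp
  obtain ⟨hx, hy⟩ := Set.mem_prod.mp hp
  simp only [Set.mem_singleton_iff] at hy
  subst hy
  refine T.frontier_subset_skeleton hc ?_
  rw [c.isClosed_toSet.frontier_eq]
  refine ⟨Rect.mem_toSet.mpr ⟨hx, le_refl _, c.hy.le⟩, fun hint => ?_⟩
  rw [Rect.interior_toSet] at hint
  exact absurd hint.2.1 (lt_irrefl _)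

lemma cell_ymax_lEdge {T : TMesh} {c : Rect} (hc : c ∈ T.cells) :
    ∃ a b, HorizLEdgeAt T a b c.ymax := by
  refine exists_horizLEdge T c.hx ?_
  rintro ⟨x, y⟩ hp
  obtain ⟨hx, hy⟩ := Set.mem_prod.mp hp
  simp only [Set.mem_singleton_iff] at hy
  subst hy
  refine T.frontier_subset_skeleton hc ?_
  rw [c.isClosed_toSet.frontier_eq]
  refine ⟨Rect.mem_toSet.mpr ⟨hx, c.hy.le, le_refl _⟩, fun hint => ?_⟩
  rw [Rect.interior_toSet] at hint
  exact absurd hint.2.2 (lt_irrefl _)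

/-- A bivariate polynomial of `y`-degree at most 1, with `x` frozen, is affine in `y`. -/
lemma eval_affine {p : MvPolynomial (Fin 2) ℝ} (hp : p.degreeOf 1 ≤ 1) (s : ℝ) :
    ∃ A B : ℝ, ∀ y : ℝ, MvPolynomial.eval ![s, y] p = A + B * y := by
  classical
  refine ⟨∑ d ∈ p.support.filter (fun d => d 1 = 0), p.coeff d * s ^ d 0,
          ∑ d ∈ p.support.filter (fun d => ¬ d 1 = 0), p.coeff d * s ^ d 0, fun y => ?_⟩
  rw [MvPolynomial.eval_eq', ← Finset.sum_filter_add_sum_filter_not p.support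
    (fun d => d 1 = 0)]
  congr 1
  · refine Finset.sum_congr rfl fun d hd => ?_
    obtain ⟨-, hd1⟩ := Finset.mem_filter.mp hd
    rw [Fin.prod_univ_two]
    simp [hd1]
  · rw [Finset.sum_mul]
    refine Finset.sum_congr rfl fun d hd => ?_
    obtain ⟨hds, hd1⟩ := Finset.mem_filter.mp hd
    have hle := MvPolynomial.degreeOf_le_iff.mp hp d hds
    have hd1' : d 1 = 1 := by omega
    rw [Fin.prod_univ_two]
    simp [hd1']
    ring

end JumpAux2

section JumpAux3

variable {T : TMesh} {g : ℝ × ℝ → ℝ}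

lemma g_continuous (hg : g ∈ SBar 1 1 0 0 T) : Continuous g := by
  have h := hg.2.2.1 0 0 (by norm_num) (by norm_num)
  simp only [mpW, Function.iterate_zero, id] at h
  exact continuousOn_univ.mp h

lemma g_zero_left (hg : g ∈ SBar 1 1 0 0 T) {s t : ℝ} (h : s < T.outer.xmin) :
    g (s, t) = 0 :=
  hg.1 _ (fun hm => absurd (TMesh.mem_Omega.mp hm).1.1 (not_le.mpr h))

lemma g_zero_right (hg : g ∈ SBar 1 1 0 0 T) {s t : ℝ} (h : T.outer.xmax < s) :
    g (s, t) = 0 :=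
  hg.1 _ (fun hm => absurd (TMesh.mem_Omega.mp hm).1.2 (not_le.mpr h))

lemma g_zero_below (hg : g ∈ SBar 1 1 0 0 T) {s t : ℝ} (h : t < T.outer.ymin) :
    g (s, t) = 0 :=
  hg.1 _ (fun hm => absurd (TMesh.mem_Omega.mp hm).2.1 (not_le.mpr h))

lemma g_zero_above (hg : g ∈ SBar 1 1 0 0 T) {s t : ℝ} (h : T.outer.ymax < t) :
    g (s, t) = 0 :=
  hg.1 _ (fun hm => absurd (TMesh.mem_Omega.mp hm).2.2 (not_le.mpr h))

lemma g_cont_slice (hg : g ∈ SBar 1 1 0 0 T) (s : ℝ) :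
    Continuous fun y => g (s, y) :=
  (g_continuous hg).comp (continuous_const.prodMk continuous_id)

lemma g_zero_at_ymin (hg : g ∈ SBar 1 1 0 0 T) (s : ℝ) : g (s, T.outer.ymin) = 0 := by
  have h1 : Filter.Tendsto (fun y => g (s, y)) (𝓝[<] T.outer.ymin)
      (𝓝 (g (s, T.outer.ymin))) :=
    ((g_cont_slice hg s).tendsto _).mono_left nhdsWithin_le_nhds
  have h2 : Filter.Tendsto (fun y => g (s, y)) (𝓝[<] T.outer.ymin) (𝓝 0) := by
    refine Filter.Tendsto.congr' ?_ tendsto_const_nhds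
    filter_upwards [self_mem_nhdsWithin] with y hy
    exact (g_zero_below hg hy).symm
  exact tendsto_nhds_unique h1 h2

lemma g_zero_at_ymax (hg : g ∈ SBar 1 1 0 0 T) (s : ℝ) : g (s, T.outer.ymax) = 0 := by
  have h1 : Filter.Tendsto (fun y => g (s, y)) (𝓝[>] T.outer.ymax)
      (𝓝 (g (s, T.outer.ymax))) :=
    ((g_cont_slice hg s).tendsto _).mono_left nhdsWithin_le_nhds
  have h2 : Filter.Tendsto (fun y => g (s, y)) (𝓝[>] T.outer.ymax) (𝓝 0) := by
    refine Filter.Tendsto.congr' ?_ tendsto_const_nhds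
    filter_upwards [self_mem_nhdsWithin] with y hy
    exact (g_zero_above hg hy).symm
  exact tendsto_nhds_unique h1 h2

lemma pdY_zero_below (hg : g ∈ SBar 1 1 0 0 T) {s t : ℝ} (h : t < T.outer.ymin) :
    pdY g (s, t) = 0 := by
  have heq : (fun y => g ((s, t).1, y)) =ᶠ[𝓝 t] fun _ => (0 : ℝ) := by
    filter_upwards [Iio_mem_nhds h] with y hy
    exact g_zero_below hg hy
  rw [pdY, heq.deriv_eq, deriv_const]

lemma pdY_zero_above (hg : g ∈ SBar 1 1 0 0 T) {s t : ℝ} (h : T.outer.ymax < t) :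
    pdY g (s, t) = 0 := by
  have heq : (fun y => g ((s, t).1, y)) =ᶠ[𝓝 t] fun _ => (0 : ℝ) := by
    filter_upwards [Ioi_mem_nhds h] with y hy
    exact g_zero_above hg hy
  rw [pdY, heq.deriv_eq, deriv_const]

lemma limBelow_at_ymin (hg : g ∈ SBar 1 1 0 0 T) (s : ℝ) :
    limBelowY (pdY g) T.outer.ymin s = 0 := by
  refine Filter.Tendsto.limUnder_eq ?_
  refine Filter.Tendsto.congr' ?_ tendsto_const_nhds
  filter_upwards [self_mem_nhdsWithin] with t ht
  exact (pdY_zero_below hg ht).symm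

lemma limAbove_at_ymax (hg : g ∈ SBar 1 1 0 0 T) (s : ℝ) :
    limAboveY (pdY g) T.outer.ymax s = 0 := by
  refine Filter.Tendsto.limUnder_eq ?_
  refine Filter.Tendsto.congr' ?_ tendsto_const_nhds
  filter_upwards [self_mem_nhdsWithin] with t ht
  exact (pdY_zero_above hg ht).symm

/-- **Key strip lemma.** If no horizontal l-edge height lies strictly between `y1 < y2`,
then off a finite set of `s`, the slice derivative `∂g/∂y (s, ·)` is constant on
`(y1, y2)` and computes the difference quotient of `g (s, ·)` over `[y1, y2]`. -/
lemma strip_key (hg : g ∈ SBar 1 1 0 0 T) {y1 y2 : ℝ}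
    (h12 : y1 < y2) (hy1 : T.outer.ymin ≤ y1) (hy2 : y2 ≤ T.outer.ymax)
    (hnoedge : ∀ a b y, HorizLEdgeAt T a b y → y ≤ y1 ∨ y2 ≤ y) :
    ∃ Bad : Set ℝ, Bad.Finite ∧ ∀ s ∉ Bad,
      ∃ B : ℝ, (∀ t ∈ Set.Ioo y1 y2, pdY g (s, t) = B) ∧
        g (s, y2) - g (s, y1) = B * (y2 - y1) := by
  classical
  refine ⟨{T.outer.xmin, T.outer.xmax} ∪ ⋃ c ∈ T.cells, {c.xmin, c.xmax},
    (Set.finite_singleton _).insert _ |>.union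
      (T.finite_cells.biUnion fun c _ => (Set.finite_singleton _).insert _), fun s hs => ?_⟩
  simp only [Set.mem_union, Set.mem_insert_iff, Set.mem_singleton_iff, Set.mem_iUnion,
    not_or, not_exists] at hs
  obtain ⟨⟨hs1, hs2⟩, hs3⟩ := hs
  rcases lt_trichotomy s T.outer.xmin with hsl | hseq | hsl
  · -- to the left of the region : everything vanishes
    refine ⟨0, fun t _ => ?_, by rw [g_zero_left hg hsl, g_zero_left hg hsl]; ring⟩
    have : (fun y => g ((s, t).1, y)) = fun _ => (0 : ℝ) :=
      funext fun y => g_zero_left hg hsl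
    rw [pdY, this, deriv_const]
  · exact absurd hseq hs1
  rcases lt_trichotomy s T.outer.xmax with hsin | hseq' | hsr'
  · -- inside : use the cell containing the midpoint of the strip
    have ht0 : y1 < (y1 + y2) / 2 ∧ (y1 + y2) / 2 < y2 := ⟨by linarith, by linarith⟩
    have hΩ : ((s, (y1 + y2) / 2) : ℝ × ℝ) ∈ T.Omega :=
      TMesh.mem_Omega.mpr ⟨⟨hsl.le, hsin.le⟩, by constructor <;> [linarith; linarith]⟩
    obtain ⟨c, hc, hpc⟩ := TMesh.exists_cell hΩ
    obtain ⟨⟨hcx1, hcx2⟩, hcy1, hcy2⟩ := Rect.mem_toSet.mp hpc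
    have hsx1 : c.xmin < s := lt_of_le_of_ne hcx1 (fun h => (hs3 c hc).1 h.symm)
    have hsx2 : s < c.xmax := lt_of_le_of_ne hcx2 (fun h => (hs3 c hc).2 h)
    have hcy1' : c.ymin ≤ y1 := by
      obtain ⟨a', b', he⟩ := cell_ymin_lEdge hc
      rcases hnoedge a' b' c.ymin he with h | h
      · exact h
      · exact absurd (h.trans hcy1) (not_le.mpr ht0.2)
    have hcy2' : y2 ≤ c.ymax := by
      obtain ⟨a', b', he⟩ := cell_ymax_lEdge hc
      rcases hnoedge a' b' c.ymax he with h | h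
      · exact absurd (hcy2.trans h) (not_le.mpr ht0.1)
      · exact h
    obtain ⟨p, hdx, hdy, hp⟩ := hg.2.1 c hc
    obtain ⟨A, B, hAB⟩ := eval_affine hdy s
    have haff : ∀ y, y1 ≤ y → y ≤ y2 → g (s, y) = A + B * y := by
      intro y h1 h2
      have hmem : ((s, y) : ℝ × ℝ) ∈ c.toSet :=
        Rect.mem_toSet.mpr ⟨⟨hsx1.le, hsx2.le⟩, hcy1'.trans h1, h2.trans hcy2'⟩
      rw [hp _ hmem]
      exact hAB y
    refine ⟨B, fun t ht => ?_, ?_⟩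
    · have heq : (fun y => g ((s, t).1, y)) =ᶠ[𝓝 t] fun y => A + B * y := by
        filter_upwards [Ioo_mem_nhds ht.1 ht.2] with y hy
        exact haff y hy.1.le hy.2.le
      have hB : HasDerivAt (fun y : ℝ => A + B * y) B t := by
        simpa using ((hasDerivAt_id t).const_mul B).const_add A
      rw [pdY, heq.deriv_eq, hB.deriv]
    · rw [haff y1 le_rfl h12.le, haff y2 h12.le le_rfl]
      ring
  · exact absurd hseq' hs2
  · -- to the right of the region
    refine ⟨0, fun t _ => ?_, by rw [g_zero_right hg hsr', g_zero_right hg hsr']; ring⟩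
    have : (fun y => g ((s, t).1, y)) = fun _ => (0 : ℝ) :=
      funext fun y => g_zero_right hg hsr'
    rw [pdY, this, deriv_const]

end JumpAux3

/-- **Remark after Lemma 4.2.** With notation as in Lemma 4.2, the full family of
derivative-jump conditions (for `i = 0, 1, …, n`) is equivalent to the vanishing of the
integrals of the lower one-sided limits of `∂g/∂y` at the interior heights `i = 1, …, n−1`. -/
theorem deriv_jump_iff_lower_deriv_integral_zero (T : TMesh) (g : ℝ × ℝ → ℝ)
    (hg : g ∈ SBar 1 1 0 0 T)
    (n : ℕ) (ys : ℕ → ℝ) (hmono : ∀ i < n, ys i < ys (i + 1))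
    (hys : ∀ y : ℝ, (∃ a b : ℝ, HorizLEdgeAt T a b y) ↔ ∃ i ≤ n, ys i = y) :
    (∀ i ≤ n, (∫ s in T.outer.xmin..T.outer.xmax, limBelowY (pdY g) (ys i) s) =
        ∫ s in T.outer.xmin..T.outer.xmax, limAboveY (pdY g) (ys i) s) ↔
    (∀ i, 0 < i → i < n →
      (∫ s in T.outer.xmin..T.outer.xmax, limBelowY (pdY g) (ys i) s) = 0) := by
  have hlt : ∀ i j, j ≤ n → i < j → ys i < ys j := by
    intro i j hj hij
    induction j with
    | zero => omega
    | succ k ih =>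
      rcases Nat.lt_or_ge i k with h | h
      · exact (ih (by omega) h).trans (hmono k (by omega))
      · have hik : i = k := by omega
        exact hik ▸ hmono k (by omega)
  have hle : ∀ i j, j ≤ n → i ≤ j → ys i ≤ ys j := fun i j hj hij =>
    (eq_or_lt_of_le hij).elim (fun h => h ▸ le_rfl) (fun h => (hlt i j hj h).le)
  have hy0 : ys 0 = T.outer.ymin := by
    obtain ⟨i0, hi0, hieq⟩ := (hys T.outer.ymin).mp (exists_bottom_lEdge T)
    obtain ⟨a, b, he⟩ := (hys (ys 0)).mpr ⟨0, Nat.zero_le n, rfl⟩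
    have h1 : T.outer.ymin ≤ ys 0 := (height_range he).1
    have h2 : ys 0 ≤ ys i0 := hle 0 i0 hi0 (Nat.zero_le _)
    exact le_antisymm (h2.trans_eq hieq) h1
  have hyn : ys n = T.outer.ymax := by
    obtain ⟨i0, hi0, hieq⟩ := (hys T.outer.ymax).mp (exists_top_lEdge T)
    obtain ⟨a, b, he⟩ := (hys (ys n)).mpr ⟨n, le_rfl, rfl⟩
    have h1 : ys n ≤ T.outer.ymax := (height_range he).2
    have h2 : ys i0 ≤ ys n := hle i0 n le_rfl hi0
    exact le_antisymm h1 (hieq ▸ h2)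
  have hJ0 : (∫ s in T.outer.xmin..T.outer.xmax, limBelowY (pdY g) (ys 0) s) = 0 := by
    rw [hy0, intervalIntegral.integral_congr (g := fun _ => (0 : ℝ))
      (fun s _ => limBelow_at_ymin hg s)]
    simp
  have hKn : (∫ s in T.outer.xmin..T.outer.xmax, limAboveY (pdY g) (ys n) s) = 0 := by
    rw [hyn, intervalIntegral.integral_congr (g := fun _ => (0 : ℝ))
      (fun s _ => limAbove_at_ymax hg s)]
    simp
  have hF0 : (∫ s in T.outer.xmin..T.outer.xmax, g (s, ys 0)) = 0 := by
    rw [hy0, intervalIntegral.integral_congr (g := fun _ => (0 : ℝ))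
      (fun s _ => g_zero_at_ymin hg s)]
    simp
  have hFn : (∫ s in T.outer.xmin..T.outer.xmax, g (s, ys n)) = 0 := by
    rw [hyn, intervalIntegral.integral_congr (g := fun _ => (0 : ℝ))
      (fun s _ => g_zero_at_ymax hg s)]
    simp
  have hint : ∀ y : ℝ, IntervalIntegrable (fun s => g (s, y)) volume
      T.outer.xmin T.outer.xmax := fun y =>
    ((g_continuous hg).comp (continuous_id.prodMk continuous_const)).intervalIntegrable _ _
  have hmain : ∀ i < n,
      (∫ s in T.outer.xmin..T.outer.xmax, limAboveY (pdY g) (ys i) s) =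
        (∫ s in T.outer.xmin..T.outer.xmax, limBelowY (pdY g) (ys (i + 1)) s) ∧
      (∫ s in T.outer.xmin..T.outer.xmax, g (s, ys (i + 1))) -
          (∫ s in T.outer.xmin..T.outer.xmax, g (s, ys i)) =
        (∫ s in T.outer.xmin..T.outer.xmax, limAboveY (pdY g) (ys i) s) *
          (ys (i + 1) - ys i) := by
    intro i hi
    have hnoedge : ∀ a b y, HorizLEdgeAt T a b y → y ≤ ys i ∨ ys (i + 1) ≤ y := by
      intro a b y he
      obtain ⟨j, hj, rfl⟩ := (hys y).mp ⟨a, b, he⟩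
      by_contra hcon
      push_neg at hcon
      obtain ⟨h1, h2⟩ := hcon
      have hji : i < j := by
        by_contra hn
        exact absurd (hle j i (by omega) (by omega)) (not_le.mpr h1)
      have hji' : j < i + 1 := by
        by_contra hn
        exact absurd (hle (i + 1) j hj (by omega)) (not_le.mpr h2)
      omega
    obtain ⟨Bad, hBadfin, hBad⟩ := strip_key hg (hmono i hi)
      (hy0 ▸ hle 0 i (by omega) (Nat.zero_le _))
      (hyn ▸ hle (i + 1) n le_rfl (by omega)) hnoedge
    have hae : ∀ᵐ s : ℝ, s ∉ Bad :=
      (measure_eq_zero_iff_ae_notMem (μ := volume)).mp (hBadfin.measure_zero _)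
    have hptA : ∀ s ∉ Bad,
        limAboveY (pdY g) (ys i) s = limBelowY (pdY g) (ys (i + 1)) s ∧
        g (s, ys (i + 1)) - g (s, ys i) =
          limAboveY (pdY g) (ys i) s * (ys (i + 1) - ys i) := by
      intro s hsb
      obtain ⟨B, hB1, hB2⟩ := hBad s hsb
      have hup : limAboveY (pdY g) (ys i) s = B := by
        refine Filter.Tendsto.limUnder_eq ?_
        refine Filter.Tendsto.congr' ?_ tendsto_const_nhds
        filter_upwards [Ioo_mem_nhdsGT_of_mem ⟨le_refl _, hmono i hi⟩] with t ht
        exact (hB1 t ht).symm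
      have hdn : limBelowY (pdY g) (ys (i + 1)) s = B := by
        refine Filter.Tendsto.limUnder_eq ?_
        refine Filter.Tendsto.congr' ?_ tendsto_const_nhds
        filter_upwards [Ioo_mem_nhdsLT_of_mem ⟨hmono i hi, le_refl _⟩] with t ht
        exact (hB1 t ht).symm
      refine ⟨hup.trans hdn.symm, ?_⟩
      rw [hup]
      exact hB2
    constructor
    · refine intervalIntegral.integral_congr_ae ?_
      filter_upwards [hae] with s hs _
      exact (hptA s hs).1
    · rw [← intervalIntegral.integral_sub (hint _) (hint _),
        ← intervalIntegral.integral_mul_const]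
      refine intervalIntegral.integral_congr_ae ?_
      filter_upwards [hae] with s hs _
      exact (hptA s hs).2
  constructor
  · intro h i hipos hin
    have key : ∀ j, j ≤ n →
        (∫ s in T.outer.xmin..T.outer.xmax, limBelowY (pdY g) (ys j) s) = 0 := by
      intro j
      induction j with
      | zero => exact fun _ => hJ0
      | succ k ih =>
        intro hk
        rw [← (hmain k (by omega)).1, ← h k (by omega)]
        exact ih (by omega)
    exact key i (by omega)
  · intro h
    have hFzero : ∀ i, i < n → (∫ s in T.outer.xmin..T.outer.xmax, g (s, ys i)) = 0 := by
      intro i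
      induction i with
      | zero => exact fun _ => hF0
      | succ k ih =>
        intro hk
        have h1 := (hmain k (by omega)).2
        have hKk : (∫ s in T.outer.xmin..T.outer.xmax, limAboveY (pdY g) (ys k) s) = 0 := by
          rw [(hmain k (by omega)).1]
          exact h (k + 1) (by omega) (by omega)
        rw [ih (by omega), hKk] at h1
        linarith
    have hJn : (∫ s in T.outer.xmin..T.outer.xmax, limBelowY (pdY g) (ys n) s) = 0 := by
      rcases Nat.eq_zero_or_pos n with h0 | hpos
      · rw [h0]
        exact hJ0
      · obtain ⟨m, rfl⟩ : ∃ m, n = m + 1 := ⟨n - 1, by omega⟩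
        have h1 := (hmain m (by omega)).2
        rw [hFzero m (by omega), hFn] at h1
        have hΔ : ys (m + 1) - ys m ≠ 0 := sub_ne_zero.mpr (hmono m (by omega)).ne'
        have hKm : (∫ s in T.outer.xmin..T.outer.xmax, limAboveY (pdY g) (ys m) s) = 0 :=
          (mul_eq_zero.mp (by linarith)).resolve_right hΔ
        rw [← (hmain m (by omega)).1]
        exact hKm
    have hJall : ∀ i, 0 < i → i ≤ n →
        (∫ s in T.outer.xmin..T.outer.xmax, limBelowY (pdY g) (ys i) s) = 0 := by
      intro i h1 h2
      rcases eq_or_lt_of_le h2 with rfl | h3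
      · exact hJn
      · exact h i h1 h3
    intro i hi
    rcases Nat.eq_zero_or_pos i with rfl | hipos
    · rw [hJ0]
      rcases Nat.eq_zero_or_pos n with h0 | hnpos
      · subst h0
        exact hKn.symm
      · rw [(hmain 0 hnpos).1]
        exact (hJall 1 one_pos hnpos).symm
    · rcases eq_or_lt_of_le hi with rfl | hilt
      · rw [hJall i hipos le_rfl, hKn]
      · rw [hJall i hipos hi, (hmain i hilt).1]
        exact (hJall (i + 1) (by omega) (by omega)).symm
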